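/- arXiv:1408.2643 — 2 statements merged into one kernel-verified Lean document; each statement's English description precedes it below -/
import Mathlib

section
/- Let B be a commutative Noetherian ring and let s, t ∈ B be such that Bs + Bt = B. Let I, L be ideals of B with L ⊆ I², and let P be a finitely generated projective B-module with an B-linear surjection φ : P →→ I/L. If the induced map φ ⊗ B_t can be lifted to a B_t-linear map Φ : P_t → B_t with image I_t, then there exists a B-linear map Ψ : P → B with Ψ(P) ⊆ I and Ψ(P) + sL = I, such that the composite of Ψ with the canonical map I → I/L equals φ (that is, φ lifts to a surjection P →→ I/(sL)). -/
open Polynomial TensorProduct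

/-- The height of an ideal: the infimum of the heights of the prime ideals containing it. -/
noncomputable def idealHeight {R : Type*} [CommRing R] (I : Ideal R) : ℕ∞ :=
  ⨅ (p : PrimeSpectrum R) (_ : I ≤ p.asIdeal), Order.height p

/-- A module over `A` has rank `n` if its localization at every prime ideal of `A`
is free of rank `n`. -/
def HasRankN (A : Type*) [CommRing A] (P : Type*) [AddCommGroup P] [Module A P] (n : ℕ) : Prop :=
  ∀ p : PrimeSpectrum A,
    Nonempty (Module.Basis (Fin n) (Localization.AtPrime p.asIdeal)
      (LocalizedModule p.asIdeal.primeCompl P))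

/-- A (Noetherian) commutative ring is regular if each localization at a prime is a regular
local ring, i.e. its maximal ideal is generated by (Krull dimension)-many elements. -/
def IsRegularRing' (A : Type*) [CommRing A] : Prop :=
  ∀ p : PrimeSpectrum A,
    ∃ s : Finset (Localization.AtPrime p.asIdeal),
      Ideal.span (s : Set (Localization.AtPrime p.asIdeal))
        = IsLocalRing.maximalIdeal (Localization.AtPrime p.asIdeal) ∧
      (s.card : WithBot ℕ∞) = ringKrullDim (Localization.AtPrime p.asIdeal)

/-!
Lift `φ` to `Ψ₀ : P → I` by projectivity. Away from `t` the defect `Φ - Ψ₀` takes values in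
`L_t`, so for some `N ≥ 1` the map `t ^ N • (Φ - Ψ₀)` comes from some `θ : P → L`, again by
projectivity. Writing `a s + c t ^ N = 1`, the corrected map `Ψ = Ψ₀ + c θ` still lifts `φ`, and
`J = Ψ(P) + sL` satisfies `t ^ N Φ = t ^ N Ψ + a s θ`, so `I_t = J_t`; moreover
`L = sL + t ^ N L` gives `I ⊆ J + tI`. As `I` is finitely generated, `t ^ n I ⊆ J` for some `n`,
and iterating `I ⊆ J + tI` yields `I ⊆ J + t ^ n I ⊆ J`.
-/

open Filter

namespace Submodule

variable {R M : Type*} [CommRing R] [AddCommGroup M] [Module R M]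

theorem eventually_pow_smul_mem_of_fg {S K : Submodule R M} (hS : S.FG) (t : R)
    (h : ∀ x ∈ S, ∃ n : ℕ, t ^ n • x ∈ K) : ∀ᶠ n in atTop, ∀ x ∈ S, t ^ n • x ∈ K := by
  induction S, hS using Submodule.fg_induction with
  | singleton x =>
    obtain ⟨n, hn⟩ := h x (mem_span_singleton_self x)
    filter_upwards [eventually_ge_atTop n] with m hm y hy
    obtain ⟨a, rfl⟩ := mem_span_singleton.mp hy
    rw [smul_smul, ← Nat.sub_add_cancel hm, pow_add, mul_right_comm, mul_smul]
    exact K.smul_mem _ hn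
  | sup S₁ S₂ _ _ ih₁ ih₂ =>
    filter_upwards [ih₁ fun x hx ↦ h x (mem_sup_left hx),
      ih₂ fun x hx ↦ h x (mem_sup_right hx)] with n h₁ h₂ x hx
    obtain ⟨y, hy, z, hz, rfl⟩ := mem_sup.mp hx
    rw [smul_add]
    exact K.add_mem (h₁ y hy) (h₂ z hz)

theorem le_of_le_sup_span_singleton_smul {N J : Submodule R M} {r : R} {n : ℕ}
    (h : N ≤ J ⊔ Ideal.span {r} • N) (hn : ∀ x ∈ N, r ^ n • x ∈ J) : N ≤ J := by
  have hk : ∀ k : ℕ, N ≤ J ⊔ Ideal.span {r ^ k} • N := by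
    intro k
    induction k with
    | zero => simp
    | succ k ih =>
      calc N ≤ J ⊔ Ideal.span {r ^ k} • N := ih
        _ ≤ J ⊔ Ideal.span {r ^ k} • (J ⊔ Ideal.span {r} • N) :=
          sup_le_sup_left (smul_mono_right _ h) _
        _ = J ⊔ Ideal.span {r ^ k} • J ⊔ Ideal.span {r ^ (k + 1)} • N := by
          rw [smul_sup, ← mul_smul, Ideal.span_singleton_mul_span_singleton, ← pow_succ,
            sup_assoc]
        _ ≤ J ⊔ Ideal.span {r ^ (k + 1)} • N :=
          sup_le_sup_right (sup_le le_rfl smul_le_right) _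
  refine (hk n).trans (sup_le le_rfl (smul_le.mpr fun a ha x hx ↦ ?_))
  obtain ⟨b, rfl⟩ := Ideal.mem_span_singleton'.mp ha
  rw [mul_smul]
  exact J.smul_mem b (hn x hx)

end Submodule

theorem LinearMap.range_eq_span_range_comp_of_isLocalizedModule {R Rₛ M Mₛ N : Type*}
    [CommRing R] [CommRing Rₛ] [Algebra R Rₛ] (T : Submonoid R) [IsLocalization T Rₛ]
    [AddCommGroup M] [Module R M] [AddCommGroup Mₛ] [Module R Mₛ] [Module Rₛ Mₛ]
    [IsScalarTower R Rₛ Mₛ] (f : M →ₗ[R] Mₛ) [IsLocalizedModule T f]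
    [AddCommGroup N] [Module R N] [Module Rₛ N] [IsScalarTower R Rₛ N] (Φ : Mₛ →ₗ[Rₛ] N) :
    LinearMap.range Φ = Submodule.span Rₛ (Set.range (Φ.restrictScalars R ∘ₗ f)) := by
  rw [LinearMap.range_eq_map, ← span_eq_top_of_isLocalizedModule Rₛ T f Submodule.span_univ,
    Submodule.map_span, Set.image_univ, ← Set.range_comp]
  rfl

section Away

variable {R S : Type*} [CommRing R] [CommRing S] [Algebra R S] (t : R) [IsLocalization.Away t S]

theorem Ideal.eventually_pow_smul_mem_of_map_le {I J : Ideal R} (hI : I.FG)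
    (h : I.map (algebraMap R S) ≤ J.map (algebraMap R S)) :
    ∀ᶠ n in atTop, ∀ x ∈ I, t ^ n • x ∈ J :=
  Submodule.eventually_pow_smul_mem_of_fg hI t fun x hx ↦ by
    obtain ⟨_, ⟨n, rfl⟩, hn⟩ := (IsLocalization.algebraMap_mem_map_algebraMap_iff
      (Submonoid.powers t) S J x).mp (h (Ideal.mem_map_of_mem _ hx))
    exact ⟨n, hn⟩

theorem Ideal.le_of_map_le_of_le_sup_span_mul {I J : Ideal R} (hI : I.FG)
    (hmap : I.map (algebraMap R S) ≤ J.map (algebraMap R S))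
    (h : I ≤ J ⊔ Ideal.span {t} * I) : I ≤ J :=
  have ⟨_, hn⟩ := (Ideal.eventually_pow_smul_mem_of_map_le (S := S) t hI hmap).exists
  Submodule.le_of_le_sup_span_singleton_smul h hn

theorem Module.Projective.eventually_exists_lift_pow_smul {P : Type*} [AddCommGroup P]
    [Module R P] [Module.Finite R P] [Module.Projective R P] (L : Ideal R) (D : P →ₗ[R] S)
    (hD : ∀ x, D x ∈ L.map (algebraMap R S)) :
    ∀ᶠ n in atTop, ∃ θ : P →ₗ[R] L, ∀ x, algebraMap R S (θ x) = t ^ n • D x := by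
  set L' := Submodule.map (Algebra.linearMap R S) L
  have hD' : ∀ x ∈ (⊤ : Submodule R P), ∃ n : ℕ, t ^ n • x ∈ L'.comap D := fun x _ ↦ by
    obtain ⟨⟨l, _, ⟨n, rfl⟩⟩, hl⟩ := (IsLocalization.mem_map_algebraMap_iff
      (Submonoid.powers t) S).mp (hD x)
    refine ⟨n, l, l.2, ?_⟩
    simpa [Algebra.smul_def, mul_comm] using hl.symm
  filter_upwards [Submodule.eventually_pow_smul_mem_of_fg (Module.Finite.fg_top (R := R)) t hD']
    with n hn
  obtain ⟨θ, hθ⟩ := Module.projective_lifting_property ((Algebra.linearMap R S).submoduleMap L)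
    ((t ^ n • D).codRestrict L' fun x ↦ by simpa using hn x trivial)
    ((Algebra.linearMap R S).submoduleMap_surjective L)
  exact ⟨θ, fun x ↦ congr_arg Subtype.val (LinearMap.congr_fun hθ x)⟩

end Away

section Correction

variable {B S P : Type*} [CommRing B] [CommRing S] [Algebra B S] [AddCommGroup P] [Module B P]
  {I L : Ideal B}

theorem Ideal.le_range_sup_of_surjective_mkQ_comp (Ψ : P →ₗ[B] I)
    (h : Function.Surjective ((Submodule.comap I.subtype L).mkQ ∘ₗ Ψ)) :
    I ≤ LinearMap.range (I.subtype ∘ₗ Ψ) ⊔ L := fun i hi ↦ by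
  obtain ⟨x, hx⟩ := h (Submodule.Quotient.mk ⟨i, hi⟩)
  have hdiff : Ψ x - ⟨i, hi⟩ ∈ Submodule.comap I.subtype L := (Submodule.Quotient.eq _).mp hx
  exact Submodule.mem_sup.mpr ⟨Ψ x, ⟨x, rfl⟩, i - Ψ x, by simpa using L.neg_mem hdiff, by ring⟩

theorem range_add_smul_sup_span_mul_eq [IsNoetherianRing B] {s t : B} [IsLocalization.Away t S]
    {N : ℕ} (hN : N ≠ 0) {a c : B} (hac : a * s + c * t ^ N = 1) (hLI : L ≤ I)
    (Ψ₀ : P →ₗ[B] I) (hΨ₀ : I ≤ LinearMap.range (I.subtype ∘ₗ Ψ₀) ⊔ L)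
    (Φ : P →ₗ[B] S) (hΦ : I.map (algebraMap B S) ≤ Ideal.span (Set.range Φ))
    (θ : P →ₗ[B] L) (hθ : ∀ x, algebraMap B S (θ x) = t ^ N • (Φ x - algebraMap B S (Ψ₀ x))) :
    LinearMap.range (I.subtype ∘ₗ (Ψ₀ + c • (Submodule.inclusion hLI ∘ₗ θ)))
      ⊔ Ideal.span {s} * L = I := by
  set Ψ := I.subtype ∘ₗ (Ψ₀ + c • (Submodule.inclusion hLI ∘ₗ θ))
  have hΨ : ∀ x, Ψ x = Ψ₀ x + c * θ x := fun x ↦ rfl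
  set J := LinearMap.range Ψ ⊔ Ideal.span {s} * L
  have hsL : ∀ l ∈ L, a * (s * l) ∈ J := fun l hl ↦
    Submodule.mem_sup_right (Ideal.mul_mem_left _ a
      (Ideal.mul_mem_mul (Ideal.mem_span_singleton_self s) hl))
  refine le_antisymm (sup_le ?_ (Ideal.mul_le_right.trans hLI))
    (Ideal.le_of_map_le_of_le_sup_span_mul (S := S) t (IsNoetherian.noetherian I) ?_ ?_)
  · rintro _ ⟨x, rfl⟩
    exact ((Ψ₀ + c • (Submodule.inclusion hLI ∘ₗ θ)) x).2
  · refine hΦ.trans (Ideal.span_le.mpr (Set.range_subset_iff.mpr fun x ↦ ?_))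
    have hx : algebraMap B S (t ^ N) * Φ x = algebraMap B S (t ^ N * Ψ x + a * (s * θ x)) := by
      rw [show t ^ N * Ψ x + a * (s * θ x) = t ^ N * Ψ₀ x + θ x by
        rw [hΨ]; linear_combination (θ x : B) * hac, map_add, map_mul, hθ, Algebra.smul_def]
      ring
    rw [SetLike.mem_coe, ← Ideal.unit_mul_mem_iff_mem _
      ((IsLocalization.Away.algebraMap_isUnit t).pow N), ← map_pow, hx]
    exact Ideal.mem_map_of_mem _
      (J.add_mem (Submodule.mem_sup_left (Ideal.mul_mem_left _ _ ⟨x, rfl⟩)) (hsL _ (θ x).2))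
  · intro i hi
    obtain ⟨_, ⟨x, rfl⟩, l, hl, rfl⟩ := Submodule.mem_sup.mp (hΨ₀ hi)
    have hm : l - c * θ x ∈ L := L.sub_mem hl (L.mul_mem_left c (θ x).2)
    refine Submodule.mem_sup.mpr ⟨Ψ x + a * (s * (l - c * θ x)),
      J.add_mem (Submodule.mem_sup_left ⟨x, rfl⟩) (hsL _ hm), c * (t ^ N * (l - c * θ x)),
      Ideal.mul_mem_left _ c (Ideal.mul_mem_mul
        (Ideal.mem_span_singleton.mpr (dvd_pow_self t hN)) (hLI hm)), ?_⟩
    rw [hΨ, LinearMap.comp_apply, Submodule.subtype_apply]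
    linear_combination (l - c * θ x) * hac

end Correction

theorem lift_away_from_s
    (B : Type) [CommRing B] [IsNoetherianRing B]
    (s t : B) (hst : Ideal.span {s} ⊔ Ideal.span {t} = ⊤)
    (I L : Ideal B) (hL : L ≤ I ^ 2)
    (P : Type) [AddCommGroup P] [Module B P] [Module.Finite B P] [Module.Projective B P]
    (φ : P →ₗ[B] (↥I ⧸ Submodule.comap I.subtype (L : Submodule B B)))
    (hφ : Function.Surjective φ)
    (Φ : LocalizedModule (Submonoid.powers t) P
      →ₗ[Localization (Submonoid.powers t)] Localization (Submonoid.powers t))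
    (hrange : LinearMap.range Φ
      = Ideal.map (algebraMap B (Localization (Submonoid.powers t))) I)
    (hlift : ∀ (x : P) (y : ↥I), φ x = Submodule.Quotient.mk y →
      Φ (LocalizedModule.mk x 1)
          - algebraMap B (Localization (Submonoid.powers t)) (y : B)
        ∈ Ideal.map (algebraMap B (Localization (Submonoid.powers t))) L) :
    ∃ (Ψ : P →ₗ[B] B) (hmem : ∀ x, Ψ x ∈ I),
      LinearMap.range Ψ ⊔ (Ideal.span {s} * L) = I ∧
      ∀ x, φ x = Submodule.Quotient.mk ⟨Ψ x, hmem x⟩ := by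
  have hLI : L ≤ I := hL.trans (Ideal.pow_le_self two_ne_zero)
  obtain ⟨Ψ₀, hΨ₀⟩ := Module.projective_lifting_property (Submodule.mkQ _) φ
    (Submodule.mkQ_surjective _)
  set Φ' := Φ.restrictScalars B ∘ₗ LocalizedModule.mkLinearMap (Submonoid.powers t) P
  obtain ⟨N, ⟨θ, hθ⟩, hN⟩ := ((Module.Projective.eventually_exists_lift_pow_smul t L
    (Φ' - Algebra.linearMap B _ ∘ₗ I.subtype ∘ₗ Ψ₀)
    fun x ↦ hlift x (Ψ₀ x) (by rw [← hΨ₀]; rfl)).and (eventually_ne_atTop 0)).exists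
  obtain ⟨a, c, hac⟩ : IsCoprime s (t ^ N) :=
    ((Ideal.isCoprime_span_singleton_iff s t).mp (Ideal.isCoprime_iff_sup_eq.mpr hst)).pow_right
  set Ψ := Ψ₀ + c • (Submodule.inclusion hLI ∘ₗ θ)
  refine ⟨I.subtype ∘ₗ Ψ, fun x ↦ (Ψ x).2, range_add_smul_sup_span_mul_eq hN hac hLI Ψ₀
    (Ideal.le_range_sup_of_surjective_mkQ_comp Ψ₀ (hΨ₀ ▸ hφ)) Φ' ?_ θ hθ, fun x ↦ ?_⟩
  · rw [← hrange, LinearMap.range_eq_span_range_comp_of_isLocalizedModule (Submonoid.powers t)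
      (LocalizedModule.mkLinearMap (Submonoid.powers t) P)]
  · rw [← hΨ₀]
    exact (Submodule.Quotient.eq _).mpr (by simpa [Ψ] using L.neg_mem (L.mul_mem_left c (θ x).2))
end

section
/- Let B be a commutative Noetherian ring and let I be an ideal of B. Let I₁ and I₂ be ideals of B contained in I such that I₂ ⊆ I² and I₁ + I₂ = I. Then there exists e ∈ I₂ with I = I₁ + (e), and there exists an ideal I′ of B such that I₁ = I ∩ I′ and I₂ + I′ = B. -/
open Polynomial TensorProduct

theorem idempotent_splitting
    (B : Type) [CommRing B] [IsNoetherianRing B]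
    (I I₁ I₂ : Ideal B) (h1 : I₁ ≤ I) (h2 : I₂ ≤ I) (h2' : I₂ ≤ I ^ 2)
    (hsum : I₁ ⊔ I₂ = I) :
    (∃ e ∈ I₂, I = I₁ ⊔ Ideal.span {e}) ∧
    ∃ I' : Ideal B, I₁ = I ⊓ I' ∧ I₂ ⊔ I' = ⊤ := by
  set q := Ideal.Quotient.mk I₁ with hq
  have hqs : Function.Surjective q := Ideal.Quotient.mk_surjective
  set J : Ideal (B ⧸ I₁) := I.map q with hJ
  have hmap2 : I₂.map q = J := by
    rw [hJ, ← hsum, Ideal.map_sup, Ideal.map_quotient_self, bot_sup_eq]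
  have hidem : IsIdempotentElem J := by
    have key : I₂.map q ≤ J * J := by
      refine le_trans (Ideal.map_mono h2') ?_
      rw [pow_two, Ideal.map_mul, hJ]
    have hle : J ≤ J * J := hmap2 ▸ key
    exact le_antisymm Ideal.mul_le_left hle
  obtain ⟨e, he, hJe⟩ := (Ideal.isIdempotentElem_iff_of_fg J (IsNoetherian.noetherian J)).mp hidem
  have hJe' : J = Ideal.span {e} := hJe
  obtain ⟨e', he'I₂, he'⟩ : ∃ e' ∈ I₂, q e' = e := by
    have : e ∈ I₂.map q := by rw [hmap2, hJe']; exact Ideal.subset_span rfl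
    obtain ⟨x, hx, hx'⟩ := Ideal.mem_map_iff_of_surjective q hqs |>.mp this
    exact ⟨x, hx, hx'⟩
  have hker : RingHom.ker q = I₁ := Ideal.mk_ker
  constructor
  · refine ⟨e', he'I₂, ?_⟩
    have hmaps : (I₁ ⊔ Ideal.span {e'}).map q = J := by
      rw [Ideal.map_sup, Ideal.map_quotient_self, bot_sup_eq, Ideal.map_span,
        Set.image_singleton, he', hJe']
    have h1' : I = Ideal.comap q J := by
      rw [hJ, Ideal.comap_map_of_surjective q hqs, ← RingHom.ker_eq_comap_bot, hker,
        sup_eq_left.mpr h1]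
    have h2'' : I₁ ⊔ Ideal.span {e'} = Ideal.comap q J := by
      rw [← hmaps, Ideal.comap_map_of_surjective q hqs, ← RingHom.ker_eq_comap_bot, hker]
      rw [sup_comm I₁, sup_assoc, sup_idem]
    rw [h1', h2'']
  · refine ⟨Ideal.comap q (Ideal.span {1 - e}), le_antisymm ?_ ?_, ?_⟩
    · refine le_inf h1 ?_
      intro x hx
      simp only [Ideal.mem_comap]
      have : q x = 0 := Ideal.Quotient.eq_zero_iff_mem.mpr hx
      rw [this]; exact zero_mem _
    · rintro x ⟨hxI, hxI'⟩
      have hqx : q x ∈ Ideal.span {e} := hJe' ▸ Ideal.mem_map_of_mem q hxI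
      have hqx' : q x ∈ Ideal.span {1 - e} := hxI'
      obtain ⟨a, ha⟩ := Ideal.mem_span_singleton'.mp hqx
      obtain ⟨b, hb⟩ := Ideal.mem_span_singleton'.mp hqx'
      have h0 : q x = 0 := by
        have h1 : q x * e = q x := by
          rw [← ha, mul_assoc, he.eq]
        have h2 : q x * e = 0 := by
          rw [← hb, mul_assoc, sub_mul, one_mul, he.eq, sub_self, mul_zero]
        rw [← h1, h2]
      exact Ideal.Quotient.eq_zero_iff_mem.mp h0
    · rw [Ideal.eq_top_iff_one]
      have h1m : (1 : B) - e' ∈ Ideal.comap q (Ideal.span {1 - e}) := by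
        simp only [Ideal.mem_comap, map_sub, map_one, he']
        exact Ideal.subset_span rfl
      have : (1 : B) = e' + (1 - e') := by ring
      rw [this]
      exact Ideal.add_mem _ (Ideal.mem_sup_left he'I₂) (Ideal.mem_sup_right h1m)
end
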